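/- Let E be a finite-dimensional vector space over a field k with a filtration 0 = F^0 ⊆ F^1 ⊆ ... ⊆ F^ℓ = E by subspaces, let m ≥ 1, and let S ⊆ {1,...,ℓ}^m be downward closed (i.e., if s ∈ S and s' ≤ s componentwise then s' ∈ S). Then the dimension of the subspace H := ∑_{s ∈ S} F^{s_1} ⊗ ... ⊗ F^{s_m} of E^{⊗m} equals ∑_{s ∈ S} ∏_{j=1}^m (dim F^{s_j} − dim F^{s_j − 1}). -/

import Mathlib

/-!
Choose a basis of `E` adapted to the filtration, so that `F^n` is spanned by the basis vectors
of level at most `n`, the level of a vector being the least `n` with the vector in `F^n`. The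
basis tensors then form a basis of `E^{⊗m}`, and by multilinearity `F^{s_1} ⊗ ⋯ ⊗ F^{s_m}` is
spanned by the basis tensors whose level tuple is bounded by `s`. Since levels are at least `1`
and `S` is downward closed, `H` is spanned by the basis tensors whose level tuple lies in `S`, so
its dimension is their number. Counting them fibrewise over `S`, the fibre over `s` has
`∏ j, (dim F^{s_j} - dim F^{s_j - 1})` elements.
-/

open Finset Module Submodule
open scoped TensorProduct

universe u

namespace MultilinearMap

variable {R ι N : Type*} {M : ι → Type*} [Semiring R] [∀ i, AddCommMonoid (M i)]
  [∀ i, Module R (M i)] [AddCommMonoid N] [Module R N]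

theorem map_mem_span_image_pi_of_mem_span_on [DecidableEq ι] (f : MultilinearMap R M N)
    (T : ∀ i, Set (M i)) (A : Finset ι) {v : ∀ i, M i} (hA : ∀ i ∈ A, v i ∈ span R (T i))
    (hAc : ∀ i ∉ A, v i ∈ T i) :
    f v ∈ span R (f '' Set.univ.pi T) := by
  induction A using Finset.induction generalizing v with
  | empty => exact subset_span ⟨v, fun i _ => hAc i (notMem_empty i), rfl⟩
  | insert a A ha ih =>
    suffices ∀ y ∈ span R (T a), f (Function.update v a y) ∈ span R (f '' Set.univ.pi T) by
      simpa using this (v a) (hA a (mem_insert_self a A))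
    intro y hy
    induction hy using span_induction with
    | mem x hx =>
      refine ih (fun i hi => ?_) (fun i hi => ?_)
      · rw [Function.update_of_ne (ne_of_mem_of_not_mem hi ha)]
        exact hA i (mem_insert_of_mem hi)
      · by_cases hia : i = a
        · subst hia
          simpa using hx
        · rw [Function.update_of_ne hia]
          exact hAc i (by simp [hia, hi])
    | zero => simp
    | add x y _ _ hx hy => simpa [f.map_update_add] using add_mem hx hy
    | smul c x _ hx => simpa [f.map_update_smul] using smul_mem _ c hx

theorem map_mem_span_image_pi [Finite ι] (f : MultilinearMap R M N) (T : ∀ i, Set (M i))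
    {v : ∀ i, M i} (hv : ∀ i, v i ∈ span R (T i)) :
    f v ∈ span R (f '' Set.univ.pi T) := by
  classical
  cases nonempty_fintype ι
  exact f.map_mem_span_image_pi_of_mem_span_on T univ (fun i _ => hv i)
    (fun i hi => absurd (mem_univ i) hi)

end MultilinearMap

namespace Module.Basis

theorem span_tprod_eq_span_piTensorProduct_image {R ι : Type*} {M κ : ι → Type*}
    [CommSemiring R] [∀ i, AddCommMonoid (M i)] [∀ i, Module R (M i)] [Finite ι]
    (b : ∀ i, Basis (κ i) R (M i)) (T : ∀ i, Set (κ i)) :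
    span R {x : ⨂[R] i, M i |
        ∃ v : ∀ i, M i, (∀ i, v i ∈ span R (b i '' T i)) ∧ x = PiTensorProduct.tprod R v}
      = span R (Basis.piTensorProduct b '' Set.univ.pi T) := by
  have himage : Basis.piTensorProduct b '' Set.univ.pi T
      = PiTensorProduct.tprod R '' Set.univ.pi (fun i => b i '' T i) := by
    rw [← Set.piMap_image_univ_pi, ← Set.image_comp]
    exact Set.image_congr fun p _ => Basis.piTensorProduct_apply b p
  rw [himage]
  apply le_antisymm
  · rw [span_le]
    rintro _ ⟨v, hv, rfl⟩
    exact (PiTensorProduct.tprod R).map_mem_span_image_pi _ hv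
  · apply span_mono
    rintro _ ⟨v, hv, rfl⟩
    exact ⟨v, fun i => subset_span (hv i trivial), rfl⟩

theorem finrank_span_image_finset {ι R V : Type*} [Ring R] [Nontrivial R] [StrongRankCondition R]
    [AddCommGroup V] [Module R V] (b : Basis ι R V) (T : Finset ι) :
    finrank R (span R (b '' T)) = #T := by
  have := finrank_span_eq_card (b.linearIndependent.comp ((↑) : T → ι) Subtype.val_injective)
  rwa [Set.range_comp, Subtype.range_coe_subtype, Fintype.card_coe] at this

end Module.Basis

theorem Finset.card_filter_comp_mem_eq_sum_prod {ι κ α : Type*} [Fintype ι] [Fintype κ]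
    [DecidableEq κ] [DecidableEq α] (f : ι → α) (S : Finset (κ → α)) :
    #{x : κ → ι | f ∘ x ∈ S} = ∑ s ∈ S, ∏ j, #{i | f i = s j} := by
  rw [card_eq_sum_card_fiberwise (f := (f ∘ ·)) (s := {x : κ → ι | f ∘ x ∈ S}) (t := S)
    fun x hx => (mem_filter.1 hx).2]
  refine sum_congr rfl fun s hs => ?_
  rw [← Fintype.card_piFinset]
  congr 1
  ext x
  simp only [mem_filter, mem_univ, true_and, Fintype.mem_piFinset, funext_iff,
    Function.comp_apply]
  exact ⟨And.right, fun h => ⟨by rwa [show f ∘ x = s from funext h], h⟩⟩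

section Filtration

variable {k : Type*} {E : Type u} [Field k] [AddCommGroup E] [Module k E] {F : ℕ → Submodule k E}

theorem exists_linearIndepOn_span_inter_eq (hF : Monotone F) (ℓ : ℕ) :
    ∃ B ⊆ (F ℓ : Set E), LinearIndepOn k id B ∧ ∀ n ≤ ℓ, span k (B ∩ F n) = F n := by
  induction ℓ with
  | zero =>
    have hempty := linearIndepOn_empty k (id : E → E)
    have hsub : (∅ : Set E) ⊆ F 0 := Set.empty_subset _
    refine ⟨hempty.extend hsub, hempty.extend_subset hsub, hempty.linearIndepOn_extend hsub, ?_⟩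
    intro n hn
    rw [Nat.le_zero.1 hn, Set.inter_eq_left.2 (hempty.extend_subset hsub),
      hempty.span_extend_eq_span, span_eq]
  | succ ℓ ih =>
    obtain ⟨B, hBF, hB, hspan⟩ := ih
    have hsub : B ⊆ F (ℓ + 1) := hBF.trans (hF ℓ.le_succ)
    refine ⟨hB.extend hsub, hB.extend_subset hsub, hB.linearIndepOn_extend hsub, ?_⟩
    intro n hn
    rcases hn.lt_or_eq with hn | rfl
    · refine le_antisymm (span_le.2 Set.inter_subset_right) ?_
      exact (hspan n (Nat.lt_succ_iff.1 hn)).ge.trans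
        (span_mono (Set.inter_subset_inter_left _ (hB.subset_extend hsub)))
    · rw [Set.inter_eq_left.2 (hB.extend_subset hsub), hB.span_extend_eq_span, span_eq]

theorem exists_basis_span_image_level_le_eq (hF : Monotone F) {ℓ : ℕ} (hℓ : F ℓ = ⊤) :
    ∃ (ι : Type u) (b : Basis ι k E) (lvl : ι → ℕ),
      ∀ n, span k (b '' {i | lvl i ≤ n}) = F n := by
  obtain ⟨B, hBF, hB, hspan⟩ := exists_linearIndepOn_span_inter_eq hF ℓ
  have hspan_all : ∀ n, span k (B ∩ F n) = F n := by
    intro n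
    refine le_antisymm (span_le.2 Set.inter_subset_right) ?_
    rcases le_total n ℓ with hn | hn
    · exact (hspan n hn).ge
    · calc F n ≤ F ℓ := hℓ ▸ le_top
        _ = span k (B ∩ F ℓ) := (hspan ℓ le_rfl).symm
        _ ≤ span k (B ∩ F n) := span_mono (Set.inter_subset_inter_right _ (hF hn))
  have hB_top : ⊤ ≤ span k (Set.range ((↑) : B → E)) := by
    rw [Subtype.range_coe, ← hℓ, ← hspan ℓ le_rfl]
    exact span_mono Set.inter_subset_left
  -- `sInf ∅ = 0` in `ℕ`, but each `i ∈ B` lies in `F ℓ`, so the infimum is attained.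
  let lvl : B → ℕ := fun i => sInf {n | (i : E) ∈ F n}
  have hlvl : ∀ i n, lvl i ≤ n ↔ (i : E) ∈ F n := fun i n =>
    ⟨fun h => hF h (Nat.sInf_mem (s := {n | (i : E) ∈ F n}) ⟨ℓ, hBF i.2⟩),
      fun h => Nat.sInf_le h⟩
  refine ⟨B, Basis.mk hB.linearIndependent hB_top, lvl, fun n => ?_⟩
  rw [← hspan_all n, ← Subtype.image_preimage_coe]
  congr 1
  ext x
  simp [hlvl, and_comm]

variable {ι : Type*} {b : Basis ι k E} {lvl : ι → ℕ}

theorem one_le_level (hb : ∀ n, span k (b '' {i | lvl i ≤ n}) = F n) (hF0 : F 0 = ⊥) (i : ι) :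
    1 ≤ lvl i := by
  by_contra! h
  have : b i ∈ F 0 := hb 0 ▸ subset_span ⟨i, show lvl i ≤ 0 by omega, rfl⟩
  exact b.ne_zero i (by simpa [hF0] using this)

theorem finrank_eq_card_level_le [Fintype ι] (hb : ∀ n, span k (b '' {i | lvl i ≤ n}) = F n)
    (n : ℕ) : finrank k (F n) = #{i | lvl i ≤ n} := by
  rw [← b.finrank_span_image_finset, ← hb n, coe_filter_univ]

theorem card_level_eq [Fintype ι] (hb : ∀ n, span k (b '' {i | lvl i ≤ n}) = F n) {n : ℕ}
    (hn : 1 ≤ n) : #{i | lvl i = n} = finrank k (F n) - finrank k (F (n - 1)) := by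
  classical
  have hdiff : #{i | lvl i = n}
      = #(({i | lvl i ≤ n} : Finset ι) \ ({i | lvl i ≤ n - 1} : Finset ι)) := by
    congr 1
    ext i
    simp only [mem_filter, mem_sdiff, mem_univ, true_and]
    omega
  rw [finrank_eq_card_level_le hb, finrank_eq_card_level_le hb, hdiff,
    card_sdiff_of_subset (monotone_filter_right _ fun i _ (h : lvl i ≤ n - 1) => by omega)]

variable {κ : Type*} [Finite κ]

theorem span_tprod_filtration_eq (hb : ∀ n, span k (b '' {i | lvl i ≤ n}) = F n) (s : κ → ℕ) :
    span k {x : ⨂[k] _ : κ, E | ∃ v : κ → E, (∀ j, v j ∈ F (s j)) ∧ x = PiTensorProduct.tprod k v}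
      = span k (Basis.piTensorProduct (fun _ => b) '' Set.univ.pi fun j => {i | lvl i ≤ s j}) := by
  simp_rw [← hb]
  exact Basis.span_tprod_eq_span_piTensorProduct_image (fun _ => b) _

theorem iSup_span_tprod_filtration_eq (hb : ∀ n, span k (b '' {i | lvl i ≤ n}) = F n)
    (hF0 : F 0 = ⊥) (S : Finset (κ → ℕ))
    (hdc : ∀ s ∈ S, ∀ s' : κ → ℕ, (∀ j, 1 ≤ s' j) → (∀ j, s' j ≤ s j) → s' ∈ S) :
    ⨆ s ∈ S, span k
        {x : ⨂[k] _ : κ, E | ∃ v : κ → E, (∀ j, v j ∈ F (s j)) ∧ x = PiTensorProduct.tprod k v}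
      = span k (Basis.piTensorProduct (fun _ => b) '' {x | lvl ∘ x ∈ S}) := by
  simp_rw [span_tprod_filtration_eq hb, ← span_iUnion₂, ← Set.image_iUnion₂]
  congr 2
  ext x
  simp only [Set.mem_iUnion, Set.mem_univ_pi, Set.mem_ofPred_eq, exists_prop]
  exact ⟨fun ⟨s, hs, hx⟩ => hdc s hs _ (fun j => one_le_level hb hF0 (x j)) hx,
    fun h => ⟨_, h, fun _ => le_rfl⟩⟩

end Filtration

theorem finrank_sum_product_subspaces_general (k E : Type*) [Field k] [AddCommGroup E]
    [Module k E] [FiniteDimensional k E]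
    (ℓ m : ℕ)
    (F : ℕ → Submodule k E) (hF0 : F 0 = ⊥) (hFℓ : F ℓ = ⊤)
    (hmono : ∀ i, F i ≤ F (i + 1))
    (S : Finset (Fin m → ℕ))
    (hS : ∀ s ∈ S, ∀ j : Fin m, 1 ≤ s j ∧ s j ≤ ℓ)
    (hdc : ∀ s ∈ S, ∀ s' : Fin m → ℕ, (∀ j, 1 ≤ s' j) → (∀ j, s' j ≤ s j) → s' ∈ S) :
    Module.finrank k
        ↥(⨆ s ∈ S, Submodule.span k
          {x : ⨂[k] (_i : Fin m), E |
            ∃ v : Fin m → E, (∀ j, v j ∈ F (s j)) ∧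
              x = PiTensorProduct.tprod k v})
      = ∑ s ∈ S, ∏ j : Fin m,
          (Module.finrank k (F (s j)) - Module.finrank k (F (s j - 1))) := by
  classical
  obtain ⟨ι, b, lvl, hb⟩ := exists_basis_span_image_level_le_eq (monotone_nat_of_le_succ hmono) hFℓ
  have := FiniteDimensional.fintypeBasisIndex b
  rw [iSup_span_tprod_filtration_eq hb hF0 S hdc, ← coe_filter_univ,
    Basis.finrank_span_image_finset, card_filter_comp_mem_eq_sum_prod]
  exact sum_congr rfl fun s hs => prod_congr rfl fun j _ => card_level_eq hb (hS s hs j).1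

theorem finrank_sum_product_subspaces (k E : Type*) [Field k] [AddCommGroup E]
    [Module k E] [FiniteDimensional k E]
    (ℓ m : ℕ) (hm : 1 ≤ m)
    (F : ℕ → Submodule k E) (hF0 : F 0 = ⊥) (hFℓ : F ℓ = ⊤)
    (hmono : ∀ i, F i ≤ F (i + 1))
    (S : Finset (Fin m → ℕ))
    (hS : ∀ s ∈ S, ∀ j : Fin m, 1 ≤ s j ∧ s j ≤ ℓ)
    (hdc : ∀ s ∈ S, ∀ s' : Fin m → ℕ, (∀ j, 1 ≤ s' j) → (∀ j, s' j ≤ s j) → s' ∈ S) :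
    Module.finrank k
        ↥(⨆ s ∈ S, Submodule.span k
          {x : ⨂[k] (_i : Fin m), E |
            ∃ v : Fin m → E, (∀ j, v j ∈ F (s j)) ∧
              x = PiTensorProduct.tprod k v})
      = ∑ s ∈ S, ∏ j : Fin m,
          (Module.finrank k (F (s j)) - Module.finrank k (F (s j - 1))) :=
  finrank_sum_product_subspaces_general k E ℓ m F hF0 hFℓ hmono S hS hdc
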